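/- Let G be a (P3 ∪ P2, house)-free graph such that every proper induced subgraph G' of G satisfies χ(G') ≤ 2ω(G'), while χ(G) > 2ω(G), and suppose v1, v2, v3, v4 induce a 2K2 in G with edges v1v2 and v3v4. Then for every S ⊆ {1,2,3,4} with |S| = 2, the induced subgraph G[N_S] is P3-free. -/

import Mathlib

open SimpleGraph

/-- The disjoint union of a path on 3 vertices and a path on 2 vertices,
with edges `01`, `12` and `34`. -/
def P3uP2 : SimpleGraph (Fin 5) :=
  SimpleGraph.fromEdgeSet {s(0, 1), s(1, 2), s(3, 4)}

/-- The house graph: the complement of the path on 5 vertices. -/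
def house : SimpleGraph (Fin 5) := (SimpleGraph.pathGraph 5)ᶜ

/-- `G` has no induced subgraph isomorphic to `H`. -/
def IsInducedFree {V : Type*} {W : Type*} (G : SimpleGraph V) (H : SimpleGraph W) : Prop :=
  IsEmpty (H ↪g G)

/-- The four distinct vertices `v 0, v 1, v 2, v 3` induce a `2K₂` in `G`,
with edges `v 0 — v 1` and `v 2 — v 3` (here `v 0, v 1, v 2, v 3` play the roles of
`v₁, v₂, v₃, v₄`). -/
def Induces2K2 {V : Type*} (G : SimpleGraph V) (v : Fin 4 → V) : Prop :=
  Function.Injective v ∧ G.Adj (v 0) (v 1) ∧ G.Adj (v 2) (v 3) ∧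
  ¬ G.Adj (v 0) (v 2) ∧ ¬ G.Adj (v 0) (v 3) ∧ ¬ G.Adj (v 1) (v 2) ∧ ¬ G.Adj (v 1) (v 3)

/-- `NS G v S` is the set of vertices outside `{v 0, v 1, v 2, v 3}` that are adjacent
to `v i` exactly for the indices `i ∈ S`. -/
def NS {V : Type*} (G : SimpleGraph V) (v : Fin 4 → V) (S : Finset (Fin 4)) : Set V :=
  {u | (∀ i, u ≠ v i) ∧ ∀ i, G.Adj u (v i) ↔ i ∈ S}

/-- `X` is anticomplete to `Y`: there is no edge between `X` and `Y`. -/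
def Anticomplete {V : Type*} (G : SimpleGraph V) (X Y : Set V) : Prop :=
  ∀ x ∈ X, ∀ y ∈ Y, ¬ G.Adj x y

/-- `X` is complete to `Y`: every vertex of `X` is adjacent to every vertex of `Y`. -/
def CompleteTo {V : Type*} (G : SimpleGraph V) (X Y : Set V) : Prop :=
  ∀ x ∈ X, ∀ y ∈ Y, G.Adj x y

/-! If `S` meets only one edge of the `2K₂`, an induced `P₃` in `N_S` and the other edge form an
induced `P₃ ∪ P₂`. Otherwise `S` consists of an end `a` of one edge and an end `c` of the other;
let `b`, `d` be the remaining ends. For an induced `P₃` `x y z` in `N_S`, excluding `P₃ ∪ P₂` and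
the house around a neighbour `t` of `b` forces `t` to be a neighbour of `x`. So `b` is dominated by
the nonadjacent vertex `x`: a colouring of `G - b` extends to `G` by giving `b` the colour of `x`,
whence `χ(G) ≤ χ(G - b) ≤ 2ω(G - b) ≤ 2ω(G)`, contradicting `χ(G) > 2ω(G)`. -/

namespace SimpleGraph

variable {V W : Type*} {G : SimpleGraph V} {H : SimpleGraph W}

theorem adj_iff_of_adj_iff_of_lt [LinearOrder W] {f : W → V}
    (hf : ∀ i j, i < j → (G.Adj (f i) (f j) ↔ H.Adj i j)) (i j : W) :
    G.Adj (f i) (f j) ↔ H.Adj i j := by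
  rcases lt_trichotomy i j with h | rfl | h
  · exact hf i j h
  · simp
  · rw [G.adj_comm, H.adj_comm]
    exact hf j i h

theorem chromaticNumber_le_induce_compl_of_neighborSet_subset {u w : V} (hne : u ≠ w)
    (hsub : G.neighborSet u ⊆ G.neighborSet w) :
    G.chromaticNumber ≤ (G.induce {u}ᶜ).chromaticNumber := by
  classical
  refine chromaticNumber_mono_of_hom
    { toFun := fun p => if hp : p = u then ⟨w, hne.symm⟩ else ⟨p, hp⟩, map_rel' := ?_ }
  intro p q hpq
  by_cases hp : p = u <;> by_cases hq : q = u
  · exact absurd (hp.trans hq.symm) hpq.ne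
  · subst hp
    simpa [hq] using hsub hpq
  · subst hq
    simpa [hp] using (hsub hpq.symm).symm
  · simpa [hp, hq] using hpq

end SimpleGraph

open SimpleGraph

theorem P3uP2_eq_of_forall_adj_iff :
    ∀ i j, (∀ k, P3uP2.Adj i k ↔ P3uP2.Adj j k) → i = j ∨ i = 0 ∧ j = 2 ∨ i = 2 ∧ j = 0 := by
  unfold P3uP2
  decide

theorem house_eq_of_forall_adj_iff : ∀ i j, (∀ k, house.Adj i k ↔ house.Adj j k) → i = j := by
  simp only [house, compl_adj, pathGraph_adj]
  decide

section

variable {V W : Type*} {G : SimpleGraph V} {H : SimpleGraph W}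

theorem IsInducedFree.false_of_adj_iff (hG : IsInducedFree G H) {f : W → V}
    (hf : ∀ i j, G.Adj (f i) (f j) ↔ H.Adj i j)
    (htwin : ∀ i j, (∀ k, H.Adj i k ↔ H.Adj j k) → f i = f j → i = j) : False :=
  hG.false ⟨⟨f, fun i j hij => htwin i j (fun k => by rw [← hf, ← hf, hij]) hij⟩, hf _ _⟩

theorem isInducedFree_induce_pathGraph_three {s : Set V}
    (h : ∀ x ∈ s, ∀ y ∈ s, ∀ z ∈ s, G.Adj x y → G.Adj y z → ¬ G.Adj x z → x ≠ z → False) :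
    IsInducedFree (G.induce s) (pathGraph 3) := by
  refine ⟨fun e => h _ (e 0).2 _ (e 1).2 _ (e 2).2 ?_ ?_ ?_ ?_⟩
  · exact e.map_rel_iff.mpr (by simp [pathGraph_adj])
  · exact e.map_rel_iff.mpr (by simp [pathGraph_adj])
  · intro h02
    simpa [pathGraph_adj] using e.map_rel_iff.mp (show (G.induce s).Adj _ _ from h02)
  · exact fun h02 => absurd (e.injective (Subtype.ext h02)) (by decide)

theorem IsInducedFree.false_of_P3uP2 (h : IsInducedFree G P3uP2) {p q r s t : V} (hpr_ne : p ≠ r)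
    (hpq : G.Adj p q) (hqr : G.Adj q r) (hst : G.Adj s t)
    (hpr : ¬ G.Adj p r) (hps : ¬ G.Adj p s) (hpt : ¬ G.Adj p t)
    (hqs : ¬ G.Adj q s) (hqt : ¬ G.Adj q t) (hrs : ¬ G.Adj r s) (hrt : ¬ G.Adj r t) :
    False := by
  refine h.false_of_adj_iff (f := ![p, q, r, s, t]) (adj_iff_of_adj_iff_of_lt ?_) ?_
  · intro i j hij
    fin_cases i <;> fin_cases j <;> simp_all [P3uP2]
  · intro i j hij hf
    rcases P3uP2_eq_of_forall_adj_iff i j hij with h | ⟨rfl, rfl⟩ | ⟨rfl, rfl⟩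
    · exact h
    · exact absurd hf hpr_ne
    · exact absurd hf.symm hpr_ne

theorem IsInducedFree.false_of_house (h : IsInducedFree G house) {a b c d e : V}
    (hac : G.Adj a c) (had : G.Adj a d) (hae : G.Adj a e)
    (hbd : G.Adj b d) (hbe : G.Adj b e) (hce : G.Adj c e)
    (hab : ¬ G.Adj a b) (hbc : ¬ G.Adj b c) (hcd : ¬ G.Adj c d) (hde : ¬ G.Adj d e) :
    False := by
  refine h.false_of_adj_iff (f := ![a, b, c, d, e]) (adj_iff_of_adj_iff_of_lt ?_)
    fun i j hij _ => house_eq_of_forall_adj_iff i j hij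
  intro i j hij
  fin_cases i <;> fin_cases j <;> simp_all [house, pathGraph_adj]

theorem not_neighborSet_subset_of_critical [Finite V]
    (hmin : ∀ s : Set V, s ≠ Set.univ →
      (G.induce s).chromaticNumber ≤ 2 * ((G.induce s).cliqueNum : ℕ∞))
    (hG : 2 * (G.cliqueNum : ℕ∞) < G.chromaticNumber) {u w : V} (hne : u ≠ w) :
    ¬ G.neighborSet u ⊆ G.neighborSet w := by
  intro hsub
  have hu : ({u}ᶜ : Set V) ≠ Set.univ := (Set.ne_univ_iff_exists_notMem _).2 ⟨u, by simp⟩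
  refine hG.not_ge ?_
  calc G.chromaticNumber
      ≤ (G.induce {u}ᶜ).chromaticNumber :=
        chromaticNumber_le_induce_compl_of_neighborSet_subset hne hsub
    _ ≤ 2 * ((G.induce {u}ᶜ).cliqueNum : ℕ∞) := hmin _ hu
    _ ≤ 2 * (G.cliqueNum : ℕ∞) := by gcongr; exact_mod_cast G.cliqueNum_induce_le _

theorem isInducedFree_induce_pathGraph_three_of_anticomplete_edge (h1 : IsInducedFree G P3uP2)
    {c d : V} (hcd : G.Adj c d) {s : Set V} (hs : Anticomplete G s {c, d}) :
    IsInducedFree (G.induce s) (pathGraph 3) :=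
  isInducedFree_induce_pathGraph_three fun x hx y hy z hz hxy hyz hxz hxz_ne =>
    h1.false_of_P3uP2 hxz_ne hxy hyz hcd hxz (hs x hx c (by simp)) (hs x hx d (by simp))
      (hs y hy c (by simp)) (hs y hy d (by simp)) (hs z hz c (by simp)) (hs z hz d (by simp))

theorem neighborSet_subset_of_completeTo_of_anticomplete
    (h1 : IsInducedFree G P3uP2) (h2 : IsInducedFree G house) {a b c d : V}
    (hab : G.Adj a b) (hcd : G.Adj c d)
    (hac : ¬ G.Adj a c) (had : ¬ G.Adj a d) (hbc : ¬ G.Adj b c) (hbd : ¬ G.Adj b d)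
    {s : Set V} (hcomp : CompleteTo G s {a, c}) (hanti : Anticomplete G s {b, d})
    {x y z : V} (hx : x ∈ s) (hy : y ∈ s) (hz : z ∈ s)
    (hxy : G.Adj x y) (hyz : G.Adj y z) (hxz : ¬ G.Adj x z) (hxz_ne : x ≠ z) :
    G.neighborSet b ⊆ G.neighborSet x := by
  have pattern : ∀ u ∈ s, G.Adj u a ∧ G.Adj u c ∧ ¬ G.Adj u b ∧ ¬ G.Adj u d := fun u hu =>
    ⟨hcomp u hu a (by simp), hcomp u hu c (by simp), hanti u hu b (by simp),
      hanti u hu d (by simp)⟩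
  obtain ⟨hxa, hxc, hxb, hxd⟩ := pattern x hx
  obtain ⟨hya, hyc, hyb, hyd⟩ := pattern y hy
  obtain ⟨hza, hzc, hzb, -⟩ := pattern z hz
  intro t (hbt : G.Adj b t)
  by_contra htx
  replace htx : ¬ G.Adj x t := htx
  have hty_or_htz : G.Adj t y ∨ G.Adj t z := by
    by_contra! h
    exact h1.false_of_P3uP2 hxz_ne hxy hyz hbt hxz hxb htx hyb (mt Adj.symm h.1) hzb
      (mt Adj.symm h.2)
  have htc : G.Adj t c := by
    by_contra htc
    by_cases htd : G.Adj t d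
    · by_cases hty : G.Adj t y
      · exact h2.false_of_house hxy.symm hty.symm hyc htd.symm hcd.symm hxc hyd
          (mt Adj.symm hxd) htx htc
      · exact h1.false_of_P3uP2 (G.ne_of_adj_of_not_adj hab.symm (mt Adj.symm had)) hbt htd
          hxy hbd (mt Adj.symm hxb) (mt Adj.symm hyb) (mt Adj.symm htx) hty (mt Adj.symm hxd)
          (mt Adj.symm hyd)
    · exact h1.false_of_P3uP2 (G.ne_of_adj_of_not_adj hxa (mt Adj.symm had)) hxc hcd hbt hxd
        hxb htx (mt Adj.symm hbc) (mt Adj.symm htc) (mt Adj.symm hbd) (mt Adj.symm htd)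
  have hta : ¬ G.Adj t a := fun hta =>
    h2.false_of_house hab hxa.symm hta.symm hxc.symm htc.symm hbt hac (mt Adj.symm hbc)
      (mt Adj.symm hxb) htx
  rcases hty_or_htz with hty | htz
  · exact h2.false_of_house hxy.symm hty.symm hya hbt hab.symm hxa hyb (mt Adj.symm hxb) htx hta
  · exact h2.false_of_house htz.symm hza hzc hxa hxc htc (mt Adj.symm hxz) htx hta hac

theorem isInducedFree_induce_pathGraph_three_of_completeTo [Finite V]
    (h1 : IsInducedFree G P3uP2) (h2 : IsInducedFree G house)
    (hmin : ∀ s : Set V, s ≠ Set.univ →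
      (G.induce s).chromaticNumber ≤ 2 * ((G.induce s).cliqueNum : ℕ∞))
    (hG : 2 * (G.cliqueNum : ℕ∞) < G.chromaticNumber) {a b c d : V}
    (hab : G.Adj a b) (hcd : G.Adj c d)
    (hac : ¬ G.Adj a c) (had : ¬ G.Adj a d) (hbc : ¬ G.Adj b c) (hbd : ¬ G.Adj b d)
    {s : Set V} (hcomp : CompleteTo G s {a, c}) (hanti : Anticomplete G s {b, d}) :
    IsInducedFree (G.induce s) (pathGraph 3) :=
  isInducedFree_induce_pathGraph_three fun x hx y hy z hz hxy hyz hxz hxz_ne =>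
    not_neighborSet_subset_of_critical hmin hG
      (G.ne_of_adj_of_not_adj (hcomp x hx c (by simp)) hbc).symm
      (neighborSet_subset_of_completeTo_of_anticomplete h1 h2 hab hcd hac had hbc hbd hcomp
        hanti hx hy hz hxy hyz hxz hxz_ne)

variable {v : Fin 4 → V} {S : Finset (Fin 4)} {i j : Fin 4}

theorem completeTo_NS (hi : i ∈ S := by decide) (hj : j ∈ S := by decide) :
    CompleteTo G (NS G v S) {v i, v j} := by
  rintro u hu w (rfl | rfl)
  exacts [(hu.2 i).mpr hi, (hu.2 j).mpr hj]

theorem anticomplete_NS (hi : i ∉ S := by decide) (hj : j ∉ S := by decide) :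
    Anticomplete G (NS G v S) {v i, v j} := by
  rintro u hu w (rfl | rfl)
  exacts [mt (hu.2 i).mp hi, mt (hu.2 j).mp hj]

end

theorem Finset.eq_pair_of_card_eq_two_fin_four (S : Finset (Fin 4)) (hS : S.card = 2) :
    S = {0, 1} ∨ S = {0, 2} ∨ S = {0, 3} ∨ S = {1, 2} ∨ S = {1, 3} ∨ S = {2, 3} := by
  revert S
  decide

theorem F2_NS_card_two_P3_free
    {V : Type*} [Fintype V] (G : SimpleGraph V)
    (h1 : IsInducedFree G P3uP2) (h2 : IsInducedFree G house)
    (hmin : ∀ s : Set V, s ≠ Set.univ →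
      (G.induce s).chromaticNumber ≤ 2 * ((G.induce s).cliqueNum : ℕ∞))
    (hG : 2 * (G.cliqueNum : ℕ∞) < G.chromaticNumber)
    (v : Fin 4 → V) (h2k2 : Induces2K2 G v) :
    ∀ S : Finset (Fin 4), S.card = 2 →
      IsInducedFree (G.induce (NS G v S)) (SimpleGraph.pathGraph 3) := by
  intro S hS
  obtain ⟨-, h01, h23, h02, h03, h12, h13⟩ := h2k2
  rcases S.eq_pair_of_card_eq_two_fin_four hS with rfl | rfl | rfl | rfl | rfl | rfl
  · exact isInducedFree_induce_pathGraph_three_of_anticomplete_edge h1 h23 anticomplete_NS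
  · exact isInducedFree_induce_pathGraph_three_of_completeTo h1 h2 hmin hG h01 h23 h02 h03 h12 h13
      completeTo_NS anticomplete_NS
  · exact isInducedFree_induce_pathGraph_three_of_completeTo h1 h2 hmin hG h01 h23.symm h03 h02
      h13 h12 completeTo_NS anticomplete_NS
  · exact isInducedFree_induce_pathGraph_three_of_completeTo h1 h2 hmin hG h01.symm h23 h12 h13
      h02 h03 completeTo_NS anticomplete_NS
  · exact isInducedFree_induce_pathGraph_three_of_completeTo h1 h2 hmin hG h01.symm h23.symm h13
      h12 h03 h02 completeTo_NS anticomplete_NS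
  · exact isInducedFree_induce_pathGraph_three_of_anticomplete_edge h1 h01 anticomplete_NS
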